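/- For all i, j ≥ 1, the generating function G_{ij}(z) = Σ_{n≥0} (L^n)_{ij} z^n of the (i,j) entries of the powers of the infinite Leslie matrix L satisfies z · G_{ij}(z) = 1 − Δ_{ij}(z) · Δ(z)^{-1} in ℂ[[z]]. -/

import Mathlib

/-!
The Leslie operator is a rank-one perturbation `L = e₁ ⊗ R + X` of the shift `X`. Expanding
`L^(n+1) - X^(n+1) = ∑_{k+l=n} X^k (L - X) L^l` turns every resolvent series `∑ φ(L^n v) zⁿ` into
the corresponding series for `X` plus `z · (∑ φ(X^n e₁) zⁿ) · (∑ R(L^n v) zⁿ)`. With `φ = R` this is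
a renewal equation whose solution is `(∑ R(X^n e_j) zⁿ) · Δ(z)⁻¹`, since `Δ(z) = 1 - z ∑ R(X^n e₁) zⁿ`;
with `φ` the `i`-th coordinate it gives `G_{ij}`, and expanding the `2 × 2` determinant `Δ_{ij}`
shows both sides agree.
-/

/-- Addition of a natural number to a positive natural number,
yielding a positive natural number. -/
def pnatAdd (j : ℕ+) (k : ℕ) : ℕ+ :=
  ⟨(j : ℕ) + k, Nat.lt_of_lt_of_le j.pos (Nat.le_add_right _ _)⟩

/-- The weighted kneading determinant `Δ(z) = 1 − Σ_{n≥0} a_n C_1^n z^{n+1}`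
of the Leslie difference equation, where `C_1^n = ∏_{k=1}^n b_k`.  Its
constant coefficient is `1`, so it is a unit of `ℂ[[z]]` and `Δ(z)⁻¹` is
its genuine inverse. -/
noncomputable def kneadingDet (a : ℕ → ℂ) (b : ℕ+ → ℂ) : PowerSeries ℂ :=
  1 - PowerSeries.X
        * PowerSeries.mk (fun n => a n * ∏ k ∈ Finset.range n, b (pnatAdd 1 k))

/-- The extended weighted kneading matrix `M_{ij}(z)`: the `2 × 2` matrix over
`ℂ[[z]]` with rows `(Σ (R X^n e_1) z^n, Σ (R X^n e_j) z^n)` and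
`(Σ (X^n e_1)_i z^n, Σ (X^n e_j)_i z^n)`. -/
noncomputable def kneadingMatrix
    (X : (ℕ+ →₀ ℂ) →ₗ[ℂ] (ℕ+ →₀ ℂ)) (R : (ℕ+ →₀ ℂ) →ₗ[ℂ] ℂ)
    (i j : ℕ+) : Matrix (Fin 2) (Fin 2) (PowerSeries ℂ) :=
  !![PowerSeries.mk (fun n => R ((X ^ n) (Finsupp.single (1 : ℕ+) 1))),
     PowerSeries.mk (fun n => R ((X ^ n) (Finsupp.single j 1)));
     PowerSeries.mk (fun n => ((X ^ n) (Finsupp.single (1 : ℕ+) 1)) i),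
     PowerSeries.mk (fun n => ((X ^ n) (Finsupp.single j 1)) i)]

/-- The extended weighted kneading determinant `Δ_{ij}(z) = det(I₂ − z M_{ij}(z))`. -/
noncomputable def extKneadingDet
    (X : (ℕ+ →₀ ℂ) →ₗ[ℂ] (ℕ+ →₀ ℂ)) (R : (ℕ+ →₀ ℂ) →ₗ[ℂ] ℂ)
    (i j : ℕ+) : PowerSeries ℂ :=
  Matrix.det (1 - (PowerSeries.X : PowerSeries ℂ) • kneadingMatrix X R i j)

open Finset PowerSeries

theorem pow_succ_sub_pow_succ_eq_sum_antidiagonal {A : Type*} [Ring A] (x y : A) (n : ℕ) :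
    x ^ (n + 1) - y ^ (n + 1) = ∑ p ∈ antidiagonal n, y ^ p.1 * (x - y) * x ^ p.2 := by
  induction n with
  | zero => simp
  | succ n ih =>
    have shifted : ∑ p ∈ antidiagonal n, y ^ (p.1 + 1) * (x - y) * x ^ p.2
        = y * (x ^ (n + 1) - y ^ (n + 1)) := by
      rw [ih, mul_sum]
      simp only [pow_succ', mul_assoc]
    rw [Nat.sum_antidiagonal_succ, shifted, pow_succ' x (n + 1), pow_succ' y (n + 1)]
    simp only [pow_zero, one_mul, sub_mul, mul_sub]
    abel

theorem Matrix.det_one_sub_smul_fin_two {A : Type*} [CommRing A] (z u v p q : A) :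
    (1 - z • !![u, v; p, q]).det = (1 - z * u) * (1 - z * q) - z * v * (z * p) := by
  simp [Matrix.det_fin_two]

section Resolvent

variable {K M : Type*} [CommRing K] [AddCommGroup M] [Module K M]

/-- The power series `φ ((1 - z T)⁻¹ v) = ∑ φ(Tⁿ v) zⁿ`. -/
noncomputable def resolventSeries (φ : M →ₗ[K] K) (T : Module.End K M) (v : M) : K⟦X⟧ :=
  PowerSeries.mk fun n => φ ((T ^ n) v)

theorem pow_succ_smulRight_add_apply (R : M →ₗ[K] K) (e : M) (T : Module.End K M) (v : M)
    (n : ℕ) :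
    ((R.smulRight e + T) ^ (n + 1)) v
      = (T ^ (n + 1)) v
        + ∑ p ∈ antidiagonal n, R (((R.smulRight e + T) ^ p.2) v) • (T ^ p.1) e := by
  rw [← sub_eq_iff_eq_add', ← LinearMap.sub_apply, pow_succ_sub_pow_succ_eq_sum_antidiagonal,
    add_sub_cancel_right]
  simp [LinearMap.sum_apply, Module.End.mul_apply]

theorem resolventSeries_smulRight_add (φ R : M →ₗ[K] K) (e : M) (T : Module.End K M) (v : M) :
    resolventSeries φ (R.smulRight e + T) v
      = resolventSeries φ T v
        + X * (resolventSeries φ T e * resolventSeries R (R.smulRight e + T) v) := by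
  ext (_ | n)
  · simp [resolventSeries]
  · rw [map_add, coeff_succ_X_mul]
    simp [resolventSeries, coeff_mul, pow_succ_smulRight_add_apply, mul_comm]

theorem resolventSeries_smulRight_add_mul_one_sub (R : M →ₗ[K] K) (e : M) (T : Module.End K M)
    (v : M) :
    resolventSeries R (R.smulRight e + T) v * (1 - X * resolventSeries R T e)
      = resolventSeries R T v := by
  linear_combination resolventSeries_smulRight_add R R e T v

end Resolvent

theorem pnatAdd_zero (j : ℕ+) : pnatAdd j 0 = j := rfl

theorem pnatAdd_succ (j : ℕ+) (k : ℕ) : pnatAdd j (k + 1) = pnatAdd j k + 1 := rfl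

section Leslie

variable {a : ℕ → ℂ} {b : ℕ+ → ℂ} {X : Module.End ℂ (ℕ+ →₀ ℂ)} {R : (ℕ+ →₀ ℂ) →ₗ[ℂ] ℂ}

theorem shift_pow_single (hX : ∀ j : ℕ+, X (Finsupp.single j 1) = b j • Finsupp.single (j + 1) 1)
    (j : ℕ+) (n : ℕ) :
    (X ^ n) (Finsupp.single j 1)
      = (∏ k ∈ range n, b (pnatAdd j k)) • Finsupp.single (pnatAdd j n) 1 := by
  induction n with
  | zero => simp [pnatAdd_zero]
  | succ n ih =>
    rw [pow_succ', Module.End.mul_apply, ih, map_smul, hX, ← pnatAdd_succ, prod_range_succ,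
      smul_smul, mul_comm]

theorem kneadingDet_eq_one_sub_X_mul_resolventSeries
    (hX : ∀ j : ℕ+, X (Finsupp.single j 1) = b j • Finsupp.single (j + 1) 1)
    (hR : ∀ j : ℕ+, R (Finsupp.single j 1) = a ((j : ℕ) - 1)) :
    kneadingDet a b = 1 - PowerSeries.X * resolventSeries R X (Finsupp.single 1 1) := by
  rw [kneadingDet]
  congr 2
  ext n
  rw [resolventSeries, coeff_mk, coeff_mk, shift_pow_single hX, map_smul, hR, smul_eq_mul]
  simp [pnatAdd, mul_comm]

theorem kneadingMatrix_eq_resolventSeries (i j : ℕ+) :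
    kneadingMatrix X R i j
      = !![resolventSeries R X (Finsupp.single 1 1), resolventSeries R X (Finsupp.single j 1);
           resolventSeries (Finsupp.lapply (R := ℂ) (M := ℂ) i) X (Finsupp.single 1 1),
           resolventSeries (Finsupp.lapply (R := ℂ) (M := ℂ) i) X (Finsupp.single j 1)] :=
  rfl

theorem leslie_eq_smulRight_add {L : Module.End ℂ (ℕ+ →₀ ℂ)}
    (hL : ∀ j : ℕ+, L (Finsupp.single j 1)
        = a ((j : ℕ) - 1) • Finsupp.single (1 : ℕ+) 1 + b j • Finsupp.single (j + 1) 1)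
    (hX : ∀ j : ℕ+, X (Finsupp.single j 1) = b j • Finsupp.single (j + 1) 1)
    (hR : ∀ j : ℕ+, R (Finsupp.single j 1) = a ((j : ℕ) - 1)) :
    L = R.smulRight (Finsupp.single 1 1) + X := by
  refine Finsupp.lhom_ext' fun k => LinearMap.ext_ring ?_
  simp [hL, hX, hR]

end Leslie

/-- For the infinite Leslie matrix `L` (with `L e_j = a_{j-1} e_1 + b_j e_{j+1}`),
its subdiagonal part `X` (with `X e_j = b_j e_{j+1}`) and first row `R` (with `R e_j = a_{j-1}`),
and for all `i, j ≥ 1`, the generating function `G_{ij}(z) = Σ_{n≥0} (L^n)_{ij} z^n` satisfies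
`z · G_{ij}(z) = 1 − Δ_{ij}(z) · Δ(z)⁻¹` in `ℂ[[z]]`. -/
theorem leslie_generating_function_kneading
    (a : ℕ → ℂ) (b : ℕ+ → ℂ)
    (L X : (ℕ+ →₀ ℂ) →ₗ[ℂ] (ℕ+ →₀ ℂ))
    (hL : ∀ j : ℕ+, L (Finsupp.single j 1)
        = a ((j : ℕ) - 1) • Finsupp.single (1 : ℕ+) 1
          + b j • Finsupp.single (j + 1) 1)
    (hX : ∀ j : ℕ+, X (Finsupp.single j 1) = b j • Finsupp.single (j + 1) 1)
    (R : (ℕ+ →₀ ℂ) →ₗ[ℂ] ℂ)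
    (hR : ∀ j : ℕ+, R (Finsupp.single j 1) = a ((j : ℕ) - 1))
    (i j : ℕ+) :
    PowerSeries.X * PowerSeries.mk (fun n => ((L ^ n) (Finsupp.single j 1)) i)
      = 1 - extKneadingDet X R i j * (kneadingDet a b)⁻¹ := by
  rw [leslie_eq_smulRight_add hL hX hR]
  set e₁ : ℕ+ →₀ ℂ := Finsupp.single 1 1
  set eⱼ : ℕ+ →₀ ℂ := Finsupp.single j 1
  have hΔ := kneadingDet_eq_one_sub_X_mul_resolventSeries hX hR
  have hΔ₀ : constantCoeff (kneadingDet a b) ≠ 0 := by simp [hΔ]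
  have hρ : resolventSeries R (R.smulRight e₁ + X) eⱼ
      = resolventSeries R X eⱼ * (kneadingDet a b)⁻¹ :=
    (eq_mul_inv_iff_mul_eq hΔ₀).2 (hΔ ▸ resolventSeries_smulRight_add_mul_one_sub R e₁ X eⱼ)
  change PowerSeries.X * resolventSeries (Finsupp.lapply i) _ eⱼ = _
  rw [resolventSeries_smulRight_add, hρ, extKneadingDet, kneadingMatrix_eq_resolventSeries,
    Matrix.det_one_sub_smul_fin_two, ← hΔ]
  linear_combination (1 - PowerSeries.X * resolventSeries (Finsupp.lapply i) X eⱼ)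
    * PowerSeries.mul_inv_cancel _ hΔ₀
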